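/- arXiv:2204.11339 — 3 statements merged into one kernel-verified Lean document; each statement's English description precedes it below -/
import Mathlib

section
/- Let φ_s be a continuous flow on a metric space X (satisfying the group law φ_{s+t} = φ_s ∘ φ_t) and let a : X → [0,∞) be continuous. Suppose w ∈ X is such that the forward orbit {φ_s(w) : s ≥ 0} is bounded (contained in a compact set), and suppose that every point w' whose full orbit {φ_s(w') : s ∈ ℝ} is bounded satisfies a(φ_{s'}(w')) > 0 for some s' ∈ ℝ. Then there exists s_+ ≥ 0 with a(φ_{s_+}(w)) > 0. -/
/-- geometric control extends from fully bounded to semi-bounded orbits.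
If the forward orbit of `w` lies in a compact set, and every point whose full orbit lies
in a compact set is carried by the flow to a point where `a > 0`, then some forward time
`sp ≥ 0` carries `w` to a point where `a > 0`. -/
theorem geometric_control_semibounded
    {X : Type*} [MetricSpace X]
    (φ : ℝ → X → X)
    (hφ : Continuous fun p : ℝ × X => φ p.1 p.2)
    (hid : ∀ x, φ 0 x = x)
    (hgroup : ∀ s t (x : X), φ s (φ t x) = φ (s + t) x)
    (a : X → ℝ) (ha : Continuous a) (ha0 : ∀ x, 0 ≤ a x)
    (w : X)
    (hfwd : ∃ K : Set X, IsCompact K ∧ ∀ s : ℝ, 0 ≤ s → φ s w ∈ K)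
    (hgc : ∀ w' : X, (∃ K' : Set X, IsCompact K' ∧ ∀ s : ℝ, φ s w' ∈ K') →
      ∃ s' : ℝ, 0 < a (φ s' w')) :
    ∃ sp : ℝ, 0 ≤ sp ∧ 0 < a (φ sp w) := by
  obtain ⟨K, hK, hKorb⟩ := hfwd
  -- the sequence φ n w lies in K
  have hmem : ∀ n : ℕ, φ (n : ℝ) w ∈ K := fun n => hKorb n (Nat.cast_nonneg n)
  obtain ⟨w', hw'K, ψ, hψ, hlim⟩ := hK.tendsto_subseq hmem
  -- continuity of φ s in the second variable
  have hcont : ∀ s : ℝ, Continuous fun x => φ s x := fun s =>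
    hφ.comp (continuous_const.prodMk continuous_id)
  -- full orbit of w' is in K
  have horb : ∀ s : ℝ, φ s w' ∈ K := by
    intro s
    have hcl : IsClosed K := hK.isClosed
    have htend : Filter.Tendsto (fun n => φ s (φ (ψ n : ℝ) w)) Filter.atTop (nhds (φ s w')) :=
      ((hcont s).continuousAt).tendsto.comp hlim
    refine hcl.mem_of_tendsto htend ?_
    -- eventually s + ψ n ≥ 0, so φ s (φ (ψ n) w) = φ (s + ψ n) w ∈ K
    have hρ : Filter.Tendsto (fun n => (ψ n : ℝ)) Filter.atTop Filter.atTop :=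
      tendsto_natCast_atTop_atTop.comp hψ.tendsto_atTop
    filter_upwards [hρ.eventually_ge_atTop (-s)] with n hn
    rw [hgroup]
    exact hKorb _ (by linarith)
  obtain ⟨s', hs'⟩ := hgc w' ⟨K, hK, horb⟩
  -- a (φ s' (φ (ψ n) w)) → a (φ s' w') > 0
  have htend : Filter.Tendsto (fun n => a (φ s' (φ (ψ n : ℝ) w))) Filter.atTop
      (nhds (a (φ s' w'))) :=
    (ha.continuousAt.tendsto.comp (((hcont s').continuousAt).tendsto.comp hlim))
  have hρ : Filter.Tendsto (fun n => (ψ n : ℝ)) Filter.atTop Filter.atTop :=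
    tendsto_natCast_atTop_atTop.comp hψ.tendsto_atTop
  have hev := (htend.eventually (eventually_gt_nhds hs')).and (hρ.eventually_ge_atTop (-s'))
  obtain ⟨n, hpos, hn⟩ := hev.exists
  refine ⟨s' + ψ n, by linarith, ?_⟩
  rw [← hgroup]
  exact hpos
end

section
/- Let Q(τ) = a_0 τ^2 + a_1 τ + a_2 be a real quadratic with Q(b^+) ≥ c·K and Q(b^-) ≥ c·K for some c, K > 0, where b^+ ≠ b^-. With m as in the correction construction, the minimum over τ ∈ ℝ of Q(τ) + m·(-(τ-b^+)(τ-b^-)) equals Q(b^+)Q(b^-)/(Q(b^+)+Q(b^-)) ≥ (c/2)·K. -/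
/-- the minimum of `Q(τ) + m·(-(τ-b⁺)(τ-b⁻))` equals
`Q(b⁺)Q(b⁻)/(Q(b⁺)+Q(b⁻)) ≥ (c/2)·K` when `Q(b^±) ≥ c·K > 0`. -/
theorem correction_min_value
    (a0 a1 a2 bp bm c K : ℝ) (hne : bp ≠ bm) (hc : 0 < c) (hK : 0 < K)
    (hp : c * K ≤ a0 * bp ^ 2 + a1 * bp + a2)
    (hm : c * K ≤ a0 * bm ^ 2 + a1 * bm + a2) :
    let Q : ℝ → ℝ := fun τ => a0 * τ ^ 2 + a1 * τ + a2
    let m : ℝ := -(a1 * (bp + bm) + 2 * (a0 * bp * bm + a2)) / (bp - bm) ^ 2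
    IsLeast (Set.range fun τ : ℝ => Q τ + m * (-((τ - bp) * (τ - bm))))
        (Q bp * Q bm / (Q bp + Q bm)) ∧
      (c / 2) * K ≤ Q bp * Q bm / (Q bp + Q bm) := by
  intro Q m
  have hd : bp - bm ≠ 0 := sub_ne_zero.mpr hne
  have hd2 : (bp - bm) ^ 2 ≠ 0 := pow_ne_zero _ hd
  have hd2pos : 0 < (bp - bm) ^ 2 := (sq_nonneg _).lt_of_ne (Ne.symm hd2)
  have hcK : 0 < c * K := mul_pos hc hK
  have hP : Q bp = a0 * bp ^ 2 + a1 * bp + a2 := rfl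
  have hM : Q bm = a0 * bm ^ 2 + a1 * bm + a2 := rfl
  have hPpos : 0 < Q bp := lt_of_lt_of_le hcK (hP ▸ hp)
  have hMpos : 0 < Q bm := lt_of_lt_of_le hcK (hM ▸ hm)
  have hS : 0 < Q bp + Q bm := by linarith
  have hSne : Q bp + Q bm ≠ 0 := ne_of_gt hS
  have hmd : m * (bp - bm) ^ 2 = -(a1 * (bp + bm) + 2 * (a0 * bp * bm + a2)) := by
    simp only [m]
    field_simp
  have key : ∀ τ : ℝ,
      (Q bp + Q bm) * (bp - bm) ^ 2 * (Q τ + m * (-((τ - bp) * (τ - bm)))) =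
        (bp - bm) ^ 2 * (Q bp * Q bm) +
          ((Q bp + Q bm) * (τ - bm) - Q bm * (bp - bm)) ^ 2 := by
    intro τ
    simp only [Q]
    linear_combination
      ((a0 * bp ^ 2 + a1 * bp + a2 + (a0 * bm ^ 2 + a1 * bm + a2)) *
        (-((τ - bp) * (τ - bm)))) * hmd
  constructor
  · constructor
    · refine ⟨bm + (bp - bm) * Q bm / (Q bp + Q bm), ?_⟩
      set τ := bm + (bp - bm) * Q bm / (Q bp + Q bm) with hτ
      have h2 : (Q bp + Q bm) * (τ - bm) - Q bm * (bp - bm) = 0 := by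
        rw [hτ]; field_simp; ring
      have h1 := key τ
      rw [h2] at h1
      have h3 : Q τ + m * (-((τ - bp) * (τ - bm))) = Q bp * Q bm / (Q bp + Q bm) := by
        rw [eq_div_iff hSne]
        apply mul_left_cancel₀ hd2
        linear_combination h1
      exact h3
    · rintro y ⟨τ, rfl⟩
      have h1 := key τ
      show Q bp * Q bm / (Q bp + Q bm) ≤ Q τ + m * (-((τ - bp) * (τ - bm)))
      rw [div_le_iff₀ hS]
      nlinarith [sq_nonneg ((Q bp + Q bm) * (τ - bm) - Q bm * (bp - bm)), hd2pos]
  · rw [le_div_iff₀ hS]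
    nlinarith [mul_nonneg (sub_nonneg.2 (hP ▸ hp : c * K ≤ Q bp))
      (sub_nonneg.2 (hM ▸ hm : c * K ≤ Q bm)), hcK, hPpos, hMpos]
end

section
/- Let g : ℝ^3 → ℝ^{3×3} be symmetric-matrix-valued, smooth, uniformly elliptic, and time-independent, with ‖g − I‖ small in the AF norm outside {|x| ≤ R}. Along a solution of the Hamiltonian system ẋ_k = 2τ g^{0k}(x) + 2g^{kj}(x)ξ_j, ξ̇_k = -2τ ∂_k g^{0j}(x)ξ_j - ∂_k g^{ij}(x)ξ_iξ_j, ṫ = -2τ + 2g^{0j}ξ_j, τ̇ = 0, with null initial data (p = 0) on the τ = b^+ branch, one has (1/2) d²/ds² |x_s|² = |ẋ_s|² + x_s·ẍ_s ≥ c|ξ_s|² > 0 whenever |x_s| > R, where c > 0 depends only on the ellipticity constants and the smallness of ‖g − I‖_{AF_{>R}}. -/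
/-!
On the branch `τ = b⁺` the null condition gives `0 ≤ τ ≲ |ξ|`, so `τ ≠ 0` forces `ξ ≠ 0`.
Outside `{|x| ≤ R}` the metric is `ε`-close to the identity, hence `ẋ = 2ξ + O(ε|ξ|)` and
`|ẋ|² ≥ (4 - O(ε))|ξ|²`. Every term of `x · ẍ` is a product of a coordinate of `x`, exactly one
derivative of the metric, and two factors of size `O(|ξ|)` among `τ`, `ẋ`, `ξ`; since
`|x||∂g| ≤ ε`, this gives `x · ẍ = O(ε|ξ|²)`. For `ε` small in terms of `C₁`,
`½ d²/ds² |x|² = |ẋ|² + x · ẍ ≥ 3|ξ|²`.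
-/

open Finset

section

variable {ι : Type*} [Fintype ι]

lemma abs_mul_le_of_abs_le {a b A B : ℝ} (ha : |a| ≤ A) (hb : |b| ≤ B) : |a * b| ≤ A * B :=
  abs_mul a b ▸ mul_le_mul ha hb (abs_nonneg _) ((abs_nonneg _).trans ha)

lemma abs_sum_le_card_mul {f : ι → ℝ} {a : ℝ} (h : ∀ j, |f j| ≤ a) :
    |∑ j, f j| ≤ Fintype.card ι * a := by
  refine (abs_sum_le_sum_abs _ _).trans ((sum_le_card_nsmul _ _ _ fun j _ => h j).trans_eq ?_)
  simp

lemma abs_le_sqrt_sum_sq (v : ι → ℝ) (i : ι) : |v i| ≤ √(∑ j, v j ^ 2) :=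
  Real.abs_le_sqrt (single_le_sum (f := fun j => v j ^ 2) (fun _ _ => sq_nonneg _) (mem_univ i))

lemma four_mul_sum_sq_sub_le_sum_sq {X ξ : ι → ℝ} {σ d : ℝ} (hξ : ∀ k, |ξ k| ≤ σ)
    (hd : ∀ k, |X k - 2 * ξ k| ≤ d) :
    4 * ∑ k, ξ k ^ 2 - 4 * Fintype.card ι * (σ * d) ≤ ∑ k, X k ^ 2 := by
  have hk : ∀ k, 4 * ξ k ^ 2 - 4 * (σ * d) ≤ X k ^ 2 := fun k => by
    have := neg_abs_le (ξ k * (X k - 2 * ξ k))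
    nlinarith [abs_mul_le_of_abs_le (hξ k) (hd k), sq_nonneg (X k - 2 * ξ k)]
  calc 4 * ∑ k, ξ k ^ 2 - 4 * Fintype.card ι * (σ * d)
        = ∑ k, (4 * ξ k ^ 2 - 4 * (σ * d)) := by
        simp only [sum_sub_distrib, ← mul_sum, sum_const, card_univ, nsmul_eq_mul]; ring
    _ ≤ ∑ k, X k ^ 2 := sum_le_sum fun k _ => hk k

lemma add_sqrt_sq_add_nonneg (P : ℝ) {Q : ℝ} (hQ : 0 ≤ Q) : 0 ≤ P + √(P ^ 2 + Q) := by
  have : |P| ≤ √(P ^ 2 + Q) := Real.abs_le_sqrt (by linarith)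
  linarith [neg_abs_le P]

lemma add_sqrt_sq_add_le (P : ℝ) {Q : ℝ} (hQ : 0 ≤ Q) : P + √(P ^ 2 + Q) ≤ 2 * |P| + √Q := by
  have : √(P ^ 2 + Q) ≤ |P| + √Q := Real.sqrt_le_iff.2
    ⟨by positivity, by nlinarith [sq_abs P, Real.sq_sqrt hQ, abs_nonneg P, Real.sqrt_nonneg Q]⟩
  linarith [le_abs_self P]

lemma half_deriv_deriv_sum_sq {x V : ℝ → ι → ℝ} {A : ι → ℝ} {s : ℝ}
    (hx : ∀ t k, HasDerivAt (fun t' => x t' k) (V t k) t)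
    (hV : ∀ k, HasDerivAt (fun t => V t k) (A k) s) :
    (1 / 2) * deriv (deriv fun t => ∑ i, x t i ^ 2) s
      = ∑ i, V s i ^ 2 + ∑ i, x s i * A i := by
  have hfirst : deriv (fun t => ∑ i, x t i ^ 2) = fun t => ∑ i, 2 * (x t i * V t i) := by
    funext t
    exact (HasDerivAt.fun_sum fun i _ =>
      ((hx t i).fun_pow 2).congr_deriv (by push_cast; ring)).deriv
  have hsecond : HasDerivAt (fun t => ∑ i, 2 * (x t i * V t i))
      (∑ i, 2 * (V s i * V s i + x s i * A i)) s :=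
    HasDerivAt.fun_sum fun i _ => ((hx s i).mul (hV i)).const_mul 2
  rw [hfirst, hsecond.deriv, ← mul_sum, sum_add_distrib]
  simp only [pow_two]
  ring

lemma DifferentiableAt.hasDerivAt_comp_eq_sum [DecidableEq ι] {h : (ι → ℝ) → ℝ}
    {x : ℝ → ι → ℝ} {X : ι → ℝ} {s : ℝ} (hh : DifferentiableAt ℝ h (x s))
    (hx : HasDerivAt x X s) :
    HasDerivAt (fun t => h (x t)) (∑ m, X m * fderiv ℝ h (x s) (Pi.single m 1)) s := by
  have hsum : fderiv ℝ h (x s) X = ∑ m, X m * fderiv ℝ h (x s) (Pi.single m 1) := by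
    conv_lhs => rw [pi_eq_sum_univ' X]
    simp only [map_sum, map_smul, smul_eq_mul]
  exact hsum ▸ hh.hasFDerivAt.comp_hasDerivAt s hx

/- `G0 j = g^{0j}`, `G i j = g^{ij}`, `dG0 j m = ∂_m g^{0j}` and `dG i j m = ∂_m g^{ij}`, all at the
current point. `hamAccel` is `ẍ` along a curve with `ẋ = hamVelocity` and `ξ̇ = hamForce`. -/
def hamVelocity (τ : ℝ) (G0 : ι → ℝ) (G : ι → ι → ℝ) (ξ : ι → ℝ) (k : ι) : ℝ :=
  2 * τ * G0 k + 2 * ∑ j, G k j * ξ j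

def hamForce (τ : ℝ) (dG0 : ι → ι → ℝ) (dG : ι → ι → ι → ℝ) (ξ : ι → ℝ) (k : ι) : ℝ :=
  -(2 * τ * ∑ j, dG0 j k * ξ j) - ∑ i, ∑ j, dG i j k * ξ i * ξ j

def hamAccel (τ : ℝ) (G0 : ι → ℝ) (G : ι → ι → ℝ) (dG0 : ι → ι → ℝ) (dG : ι → ι → ι → ℝ)
    (ξ : ι → ℝ) (k : ι) : ℝ :=
  let X := hamVelocity τ G0 G ξ
  2 * τ * ∑ m, X m * dG0 k m
    + 2 * ∑ j, ((∑ m, X m * dG k j m) * ξ j + G k j * hamForce τ dG0 dG ξ j)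

lemma hasDerivAt_hamVelocity [DecidableEq ι] {g : (ι → ℝ) → ι → ι → ℝ} {g0 : (ι → ℝ) → ι → ℝ}
    {τ s : ℝ} {x ξ : ℝ → ι → ℝ}
    (hg : ∀ i j, DifferentiableAt ℝ (fun y => g y i j) (x s))
    (hg0 : ∀ j, DifferentiableAt ℝ (fun y => g0 y j) (x s))
    (hx : ∀ k, HasDerivAt (fun t => x t k) (hamVelocity τ (g0 (x s)) (g (x s)) (ξ s) k) s)
    (hξ : ∀ k, HasDerivAt (fun t => ξ t k)
      (hamForce τ (fun j m => fderiv ℝ (fun y => g0 y j) (x s) (Pi.single m 1))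
        (fun i j m => fderiv ℝ (fun y => g y i j) (x s) (Pi.single m 1)) (ξ s) k) s)
    (k : ι) :
    HasDerivAt (fun t => hamVelocity τ (g0 (x t)) (g (x t)) (ξ t) k)
      (hamAccel τ (g0 (x s)) (g (x s))
        (fun j m => fderiv ℝ (fun y => g0 y j) (x s) (Pi.single m 1))
        (fun i j m => fderiv ℝ (fun y => g y i j) (x s) (Pi.single m 1)) (ξ s) k) s := by
  have hxv : HasDerivAt x (hamVelocity τ (g0 (x s)) (g (x s)) (ξ s)) s := hasDerivAt_pi.2 hx
  have hG0 := ((hg0 k).hasDerivAt_comp_eq_sum hxv).const_mul (2 * τ)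
  have hG : HasDerivAt (fun t => ∑ j, g (x t) k j * ξ t j) _ s :=
    HasDerivAt.fun_sum fun j _ => ((hg k j).hasDerivAt_comp_eq_sum hxv).mul (hξ j)
  exact hG0.add (hG.const_mul 2)

end


section Estimates

variable {ε τ σ M a : ℝ} {p ξ G0 : Fin 3 → ℝ} {G dG0 : Fin 3 → Fin 3 → ℝ}
  {dG : Fin 3 → Fin 3 → Fin 3 → ℝ}

lemma abs_sum_fin_three_le {f : Fin 3 → ℝ} {b : ℝ} (h : ∀ j, |f j| ≤ b) :
    |∑ j, f j| ≤ 3 * b := by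
  simpa using abs_sum_le_card_mul h

lemma abs_hamVelocity_sub_two_mul_le (hτ : 0 ≤ τ)
    (hG : ∀ i j, |G i j - if i = j then 1 else 0| ≤ ε) (hG0 : ∀ j, |G0 j| ≤ ε)
    (hξ : ∀ j, |ξ j| ≤ σ) (k : Fin 3) :
    |hamVelocity τ G0 G ξ k - 2 * ξ k| ≤ 2 * ε * (τ + 3 * σ) := by
  have hsplit : hamVelocity τ G0 G ξ k - 2 * ξ k
      = 2 * (τ * G0 k) + 2 * ∑ j, (G k j - if k = j then 1 else 0) * ξ j := by
    simp only [hamVelocity, sub_mul, sum_sub_distrib, ite_mul, one_mul, zero_mul, sum_ite_eq,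
      mem_univ, if_true]
    ring
  have h₁ : |τ * G0 k| ≤ τ * ε := abs_mul_le_of_abs_le (abs_of_nonneg hτ).le (hG0 k)
  have h₂ := abs_sum_fin_three_le fun j => abs_mul_le_of_abs_le (hG k j) (hξ j)
  rw [hsplit]
  refine (abs_add_le _ _).trans ?_
  rw [abs_mul 2, abs_mul 2, abs_two]
  linarith

lemma abs_mul_sum_mul_le {X d : Fin 3 → ℝ} (hX : ∀ m, |X m| ≤ M) (hd : ∀ m, |a * d m| ≤ ε) :
    |a * ∑ m, X m * d m| ≤ 3 * (M * ε) := by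
  rw [mul_sum]
  exact abs_sum_fin_three_le fun m =>
    (congrArg abs (by ring)).trans_le (abs_mul_le_of_abs_le (hX m) (hd m))

lemma abs_mul_hamForce_le (hτ : |τ| ≤ M) (hξ : ∀ j, |ξ j| ≤ M)
    (hdG0 : ∀ j m, |a * dG0 j m| ≤ ε) (hdG : ∀ i j m, |a * dG i j m| ≤ ε) (k : Fin 3) :
    |a * hamForce τ dG0 dG ξ k| ≤ 15 * ε * M ^ 2 := by
  have hsplit : a * hamForce τ dG0 dG ξ k
      = -(2 * (τ * (a * ∑ j, ξ j * dG0 j k))) - ∑ i, ∑ j, (a * dG i j k) * ξ i * ξ j := by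
    simp only [hamForce, Fin.sum_univ_three]
    ring
  have h₁ := abs_mul_le_of_abs_le hτ (abs_mul_sum_mul_le hξ fun j => hdG0 j k)
  have h₂ := abs_sum_fin_three_le fun i => abs_sum_fin_three_le fun j =>
    abs_mul_le_of_abs_le (abs_mul_le_of_abs_le (hdG i j k) (hξ i)) (hξ j)
  rw [hsplit]
  refine (abs_sub _ _).trans ?_
  rw [abs_neg, abs_mul 2, abs_two]
  linarith

lemma abs_mul_hamAccel_le (hτ : |τ| ≤ M) (hξ : ∀ j, |ξ j| ≤ M)
    (hX : ∀ m, |hamVelocity τ G0 G ξ m| ≤ M) (hG : ∀ i j, |G i j| ≤ 2)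
    (hdG0 : ∀ j m, |a * dG0 j m| ≤ ε) (hdG : ∀ i j m, |a * dG i j m| ≤ ε) (k : Fin 3) :
    |a * hamAccel τ G0 G dG0 dG ξ k| ≤ 204 * ε * M ^ 2 := by
  set X := hamVelocity τ G0 G ξ
  have hsplit : a * hamAccel τ G0 G dG0 dG ξ k
      = 2 * (τ * (a * ∑ m, X m * dG0 k m))
        + 2 * ∑ j, ((a * ∑ m, X m * dG k j m) * ξ j + G k j * (a * hamForce τ dG0 dG ξ j)) := by
    simp only [hamAccel, X, Fin.sum_univ_three]
    ring
  have h₁ := abs_mul_le_of_abs_le hτ (abs_mul_sum_mul_le hX (hdG0 k))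
  have h₂ := abs_sum_fin_three_le fun j => (abs_add_le _ _).trans (add_le_add
    (abs_mul_le_of_abs_le (abs_mul_sum_mul_le hX (hdG k j)) (hξ j))
    (abs_mul_le_of_abs_le (hG k j) (abs_mul_hamForce_le hτ hξ hdG0 hdG j)))
  rw [hsplit]
  refine (abs_add_le _ _).trans ?_
  rw [abs_mul 2, abs_mul 2, abs_two]
  linarith

end Estimates

section Exterior

variable {c₁ C₁ ε τ : ℝ} {p ξ G0 : Fin 3 → ℝ} {G dG0 : Fin 3 → Fin 3 → ℝ}
  {dG : Fin 3 → Fin 3 → Fin 3 → ℝ}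

lemma abs_mul_le_of_sqrt_sum_sq_mul_le {d : ℝ} (h : √(∑ l, p l ^ 2) * |d| ≤ ε) (l : Fin 3) :
    |p l * d| ≤ ε :=
  (abs_mul _ _).trans_le <|
    (mul_le_mul_of_nonneg_right (abs_le_sqrt_sum_sq p l) (abs_nonneg d)).trans h

lemma null_root_mem_Icc (hc₁ : 0 < c₁)
    (hell : c₁ * ∑ i, ξ i ^ 2 ≤ ∑ i, ∑ j, G i j * ξ i * ξ j ∧
      ∑ i, ∑ j, G i j * ξ i * ξ j ≤ C₁ * ∑ i, ξ i ^ 2)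
    (hG0 : ∀ j, |G0 j| ≤ ε)
    (hnull : τ = (∑ j, G0 j * ξ j) +
      √((∑ j, G0 j * ξ j) ^ 2 + ∑ i, ∑ j, G i j * ξ i * ξ j)) :
    τ ∈ Set.Icc 0 ((6 * ε + √C₁) * √(∑ i, ξ i ^ 2)) := by
  have hQ : 0 ≤ ∑ i, ∑ j, G i j * ξ i * ξ j := (mul_nonneg hc₁.le (by positivity)).trans hell.1
  have hP : |∑ j, G0 j * ξ j| ≤ 3 * (ε * √(∑ i, ξ i ^ 2)) :=
    abs_sum_fin_three_le fun j => abs_mul_le_of_abs_le (hG0 j) (abs_le_sqrt_sum_sq ξ j)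
  have hsqrtQ : √(∑ i, ∑ j, G i j * ξ i * ξ j) ≤ √C₁ * √(∑ i, ξ i ^ 2) :=
    (Real.sqrt_le_sqrt hell.2).trans_eq (Real.sqrt_mul' _ (by positivity))
  rw [hnull]
  exact ⟨add_sqrt_sq_add_nonneg _ hQ, (add_sqrt_sq_add_le _ hQ).trans (by linarith)⟩

theorem pos_and_three_mul_sum_sq_le_of_null (hc₁ : 0 < c₁)
    (hε : 250000 * (1 + √C₁) ^ 2 * ε ≤ 1)
    (hell : c₁ * ∑ i, ξ i ^ 2 ≤ ∑ i, ∑ j, G i j * ξ i * ξ j ∧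
      ∑ i, ∑ j, G i j * ξ i * ξ j ≤ C₁ * ∑ i, ξ i ^ 2)
    (hG : ∀ i j, |G i j - if i = j then 1 else 0| ≤ ε)
    (hdG : ∀ m i j, √(∑ l, p l ^ 2) * |dG i j m| ≤ ε)
    (hG0 : ∀ j, |G0 j| ≤ ε)
    (hdG0 : ∀ m j, √(∑ l, p l ^ 2) * |dG0 j m| ≤ ε)
    (hτ : τ ≠ 0)
    (hnull : τ = (∑ j, G0 j * ξ j) +
      √((∑ j, G0 j * ξ j) ^ 2 + ∑ i, ∑ j, G i j * ξ i * ξ j)) :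
    0 < ∑ i, ξ i ^ 2 ∧
      3 * ∑ i, ξ i ^ 2 ≤
        ∑ k, hamVelocity τ G0 G ξ k ^ 2 + ∑ k, p k * hamAccel τ G0 G dG0 dG ξ k := by
  set S := ∑ i, ξ i ^ 2
  set σ := √S
  set Λ := 1 + √C₁
  have hσσ : σ ^ 2 = S := Real.sq_sqrt (by positivity)
  have hΛ : 1 ≤ Λ := le_add_of_nonneg_right (Real.sqrt_nonneg _)
  have hε0 : 0 ≤ ε := (abs_nonneg _).trans (hG0 0)
  have hε1 : ε ≤ 1 := by nlinarith
  have hξ : ∀ j, |ξ j| ≤ σ := abs_le_sqrt_sum_sq ξ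
  obtain ⟨hτ0, hτσ⟩ := null_root_mem_Icc hc₁ hell hG0 hnull
  replace hτσ : τ ≤ 6 * Λ * σ := hτσ.trans (by nlinarith [Real.sqrt_nonneg S])
  have hσ : 0 < σ := by nlinarith [hτ0.lt_of_ne' hτ]
  have hd : ∀ k, |hamVelocity τ G0 G ξ k - 2 * ξ k| ≤ 18 * Λ * ε * σ := fun k =>
    (abs_hamVelocity_sub_two_mul_le hτ0 hG hG0 hξ k).trans (by
      nlinarith [mul_le_mul_of_nonneg_left hτσ hε0,
        mul_le_mul_of_nonneg_left hΛ (mul_nonneg hε0 hσ.le)])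
  have hX : ∀ k, |hamVelocity τ G0 G ξ k| ≤ 20 * Λ * σ := fun k => by
    have := abs_sub_abs_le_abs_sub (hamVelocity τ G0 G ξ k) (2 * ξ k)
    rw [abs_mul, abs_two] at this
    nlinarith [hd k, hξ k]
  have hvel := four_mul_sum_sq_sub_le_sum_sq hξ hd
  have hG2 : ∀ i j, |G i j| ≤ 2 := fun i j => by
    have := abs_sub_abs_le_abs_sub (G i j) (if i = j then 1 else 0)
    have : |(if i = j then (1 : ℝ) else 0)| ≤ 1 := by split_ifs <;> simp
    linarith [hG i j]
  have hτM : |τ| ≤ 20 * Λ * σ := by rw [abs_of_nonneg hτ0]; linarith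
  have hξM : ∀ j, |ξ j| ≤ 20 * Λ * σ := fun j => (hξ j).trans (by nlinarith)
  have hacc := abs_sum_fin_three_le fun k => abs_mul_hamAccel_le hτM hξM hX hG2
    (fun j m => abs_mul_le_of_sqrt_sum_sq_mul_le (hdG0 m j) k)
    (fun i j m => abs_mul_le_of_sqrt_sum_sq_mul_le (hdG m i j) k) k
  -- `|ẋ|² ≥ 4|ξ|² - 216Λε|ξ|²` and `|x · ẍ| ≤ 244800Λ²ε|ξ|²`: the source of `250000`
  have hsmall : 216 * Λ * ε * σ ^ 2 + 244800 * Λ ^ 2 * ε * σ ^ 2 ≤ σ ^ 2 := by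
    nlinarith [mul_le_mul_of_nonneg_right hε (sq_nonneg σ),
      mul_nonneg (mul_nonneg hε0 (sq_nonneg σ)) (by nlinarith : 0 ≤ Λ ^ 2 - Λ)]
  refine ⟨hσσ ▸ by positivity, ?_⟩
  simp only [Fintype.card_fin, Nat.cast_ofNat] at hvel
  linarith [neg_abs_le (∑ k, p k * hamAccel τ G0 G dG0 dG ξ k)]

end Exterior

theorem exterior_convexity_general
    (c₁ C₁ : ℝ) (hc₁ : 0 < c₁) :
    ∃ ε : ℝ, 0 < ε ∧ ∃ c : ℝ, 0 < c ∧
    ∀ (R : ℝ), 1 ≤ R →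
    ∀ (g : (Fin 3 → ℝ) → Fin 3 → Fin 3 → ℝ) (g0 : (Fin 3 → ℝ) → Fin 3 → ℝ)
      (τ : ℝ) (x ξ : ℝ → Fin 3 → ℝ),
    (∀ i j, ContDiff ℝ 1 fun y => g y i j) →
    (∀ j, ContDiff ℝ 1 fun y => g0 y j) →
    (∀ y i j, g y i j = g y j i) →
    -- uniform ellipticity
    (∀ (y v : Fin 3 → ℝ), c₁ * ∑ i, (v i) ^ 2 ≤ ∑ i, ∑ j, g y i j * v i * v j ∧
        ∑ i, ∑ j, g y i j * v i * v j ≤ C₁ * ∑ i, (v i) ^ 2) →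
    -- asymptotic flatness: smallness outside `{|y| ≤ R}`
    (∀ y : Fin 3 → ℝ, R < Real.sqrt (∑ l, (y l) ^ 2) →
      (∀ i j, |g y i j - if i = j then (1 : ℝ) else 0| ≤ ε) ∧
      (∀ k i j, Real.sqrt (∑ l, (y l) ^ 2) *
          |fderiv ℝ (fun y' => g y' i j) y (Pi.single k 1)| ≤ ε) ∧
      (∀ j, |g0 y j| ≤ ε) ∧
      (∀ k j, Real.sqrt (∑ l, (y l) ^ 2) *
          |fderiv ℝ (fun y' => g0 y' j) y (Pi.single k 1)| ≤ ε)) →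
    -- the Hamiltonian system
    (∀ (s : ℝ) (k : Fin 3), HasDerivAt (fun s' => x s' k)
        (2 * τ * g0 (x s) k + 2 * ∑ j, g (x s) k j * ξ s j) s) →
    (∀ (s : ℝ) (k : Fin 3), HasDerivAt (fun s' => ξ s' k)
        (-(2 * τ * ∑ j, fderiv ℝ (fun y => g0 y j) (x s) (Pi.single k 1) * ξ s j)
          - ∑ i, ∑ j, fderiv ℝ (fun y => g y i j) (x s) (Pi.single k 1)
              * ξ s i * ξ s j) s) →
    -- null data on the `τ = b⁺` branch
    τ ≠ 0 →
    (∀ s : ℝ, τ = (∑ j, g0 (x s) j * ξ s j) +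
        Real.sqrt ((∑ j, g0 (x s) j * ξ s j) ^ 2
          + ∑ i, ∑ j, g (x s) i j * ξ s i * ξ s j)) →
    -- conclusion
    ∀ s : ℝ, R < Real.sqrt (∑ i, (x s i) ^ 2) →
      0 < c * ∑ i, (ξ s i) ^ 2 ∧
      c * ∑ i, (ξ s i) ^ 2 ≤
        (1 / 2) * deriv (deriv fun s' => ∑ i, (x s' i) ^ 2) s := by
  refine ⟨1 / (250000 * (1 + √C₁) ^ 2), by positivity, 3, by norm_num, ?_⟩
  intro R _ g g0 τ x ξ hg hg0 _ hell hAF hx hξ hτ hnull s hs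
  obtain ⟨hG, hdG, hG0, hdG0⟩ := hAF (x s) hs
  have hacc := hasDerivAt_hamVelocity (fun i j => (hg i j).differentiable one_ne_zero (x s))
    (fun j => (hg0 j).differentiable one_ne_zero (x s)) (hx s) (hξ s)
  rw [half_deriv_deriv_sum_sq (V := fun t => hamVelocity τ (g0 (x t)) (g (x t)) (ξ t)) hx hacc]
  obtain ⟨hpos, hconv⟩ := pos_and_three_mul_sum_sq_le_of_null hc₁
    (mul_one_div_cancel (by positivity)).le (hell (x s) (ξ s)) hG hdG hG0 hdG0 hτ (hnull s)
  exact ⟨by linarith, hconv⟩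

/-- convexity of `|x_s|²` along null bicharacteristics in the
asymptotically flat exterior. On the `τ = b⁺` branch of the null characteristic set,
if `g` is close to the identity (together with `⟨x⟩`-weighted first derivatives and
`g^{0j}`) outside `{|x| ≤ R}`, then whenever `|x_s| > R` one has
`(1/2) d²/ds² |x_s|² ≥ c|ξ_s|² > 0`, with `c > 0` depending only on the ellipticity
constants and the smallness. -/
theorem exterior_convexity
    (c₁ C₁ : ℝ) (hc₁ : 0 < c₁) (hC₁ : c₁ ≤ C₁) :
    ∃ ε : ℝ, 0 < ε ∧ ∃ c : ℝ, 0 < c ∧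
    ∀ (R : ℝ), 1 ≤ R →
    ∀ (g : (Fin 3 → ℝ) → Fin 3 → Fin 3 → ℝ) (g0 : (Fin 3 → ℝ) → Fin 3 → ℝ)
      (τ : ℝ) (x ξ : ℝ → Fin 3 → ℝ),
    (∀ i j, ContDiff ℝ 1 fun y => g y i j) →
    (∀ j, ContDiff ℝ 1 fun y => g0 y j) →
    (∀ y i j, g y i j = g y j i) →
    -- uniform ellipticity
    (∀ (y v : Fin 3 → ℝ), c₁ * ∑ i, (v i) ^ 2 ≤ ∑ i, ∑ j, g y i j * v i * v j ∧
        ∑ i, ∑ j, g y i j * v i * v j ≤ C₁ * ∑ i, (v i) ^ 2) →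
    -- asymptotic flatness: smallness outside `{|y| ≤ R}`
    (∀ y : Fin 3 → ℝ, R < Real.sqrt (∑ l, (y l) ^ 2) →
      (∀ i j, |g y i j - if i = j then (1 : ℝ) else 0| ≤ ε) ∧
      (∀ k i j, Real.sqrt (∑ l, (y l) ^ 2) *
          |fderiv ℝ (fun y' => g y' i j) y (Pi.single k 1)| ≤ ε) ∧
      (∀ j, |g0 y j| ≤ ε) ∧
      (∀ k j, Real.sqrt (∑ l, (y l) ^ 2) *
          |fderiv ℝ (fun y' => g0 y' j) y (Pi.single k 1)| ≤ ε)) →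
    -- the Hamiltonian system
    (∀ (s : ℝ) (k : Fin 3), HasDerivAt (fun s' => x s' k)
        (2 * τ * g0 (x s) k + 2 * ∑ j, g (x s) k j * ξ s j) s) →
    (∀ (s : ℝ) (k : Fin 3), HasDerivAt (fun s' => ξ s' k)
        (-(2 * τ * ∑ j, fderiv ℝ (fun y => g0 y j) (x s) (Pi.single k 1) * ξ s j)
          - ∑ i, ∑ j, fderiv ℝ (fun y => g y i j) (x s) (Pi.single k 1)
              * ξ s i * ξ s j) s) →
    -- null data on the `τ = b⁺` branch
    τ ≠ 0 →
    (∀ s : ℝ, τ = (∑ j, g0 (x s) j * ξ s j) +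
        Real.sqrt ((∑ j, g0 (x s) j * ξ s j) ^ 2
          + ∑ i, ∑ j, g (x s) i j * ξ s i * ξ s j)) →
    -- conclusion
    ∀ s : ℝ, R < Real.sqrt (∑ i, (x s i) ^ 2) →
      0 < c * ∑ i, (ξ s i) ^ 2 ∧
      c * ∑ i, (ξ s i) ^ 2 ≤
        (1 / 2) * deriv (deriv fun s' => ∑ i, (x s' i) ^ 2) s :=
  exterior_convexity_general c₁ C₁ hc₁
end
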